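/- Let R be an associative ring satisfying R = [R,R], i.e. R equals the additive subgroup generated by all commutators [r₁,r₂] = r₁r₂ − r₂r₁. If I is a Lie nilpotent one-sided (left or right) ideal of R, then there exists a nilpotent two-sided ideal J of R with I ⊆ J. -/

import Mathlib

/-- `I` is a right ideal of `R` (as an additive subgroup closed under right multiplication). -/
def IsRightIdealSG {R : Type*} [Ring R] (I : AddSubgroup R) : Prop :=
  ∀ i ∈ I, ∀ r : R, i * r ∈ I

/-- `I` is a left ideal of `R`. -/
def IsLeftIdealSG {R : Type*} [Ring R] (I : AddSubgroup R) : Prop :=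
  ∀ i ∈ I, ∀ r : R, r * i ∈ I

/-- `I` is a two-sided ideal of `R`. -/
def IsIdealSG {R : Type*} [Ring R] (I : AddSubgroup R) : Prop :=
  IsLeftIdealSG I ∧ IsRightIdealSG I

/-- Left-normed iterated commutator: `itComm s n = [[...[s 0, s 1],...], s n]`
(a left-normed commutator of `n + 1` elements). -/
def itComm {R : Type*} [Ring R] (s : ℕ → R) : ℕ → R
  | 0 => s 0
  | n + 1 => itComm s n * s (n + 1) - s (n + 1) * itComm s n

/-- `S` is Lie nilpotent of class ≤ m : every left-normed commutator of `m + 1`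
elements of `S` vanishes. -/
def LieNilpotentClassLe {R : Type*} [Ring R] (S : Set R) (m : ℕ) : Prop :=
  ∀ s : ℕ → R, (∀ n, s n ∈ S) → itComm s m = 0

/-- The Lie derived series of an additive subgroup `S` of a ring:
`D 0 = S`, `D (k+1)` = additive span of `[D k, D k]`. -/
def derSeries {R : Type*} [Ring R] (S : AddSubgroup R) : ℕ → AddSubgroup R
  | 0 => S
  | n + 1 => AddSubgroup.closure
      {x | ∃ a ∈ derSeries S n, ∃ b ∈ derSeries S n, x = a * b - b * a}

/-- `R^(−)_n`: the additive subgroup generated by all left-normed commutators of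
`n` elements of `R`. -/
def lcs (R : Type*) [Ring R] (n : ℕ) : AddSubgroup R :=
  AddSubgroup.closure {x | ∃ s : ℕ → R, x = itComm s (n - 1)}

/-- `R_n = R^(−)_n + R^(−)_n · R`, a two-sided ideal of `R`. -/
def Rn (R : Type*) [Ring R] (n : ℕ) : AddSubgroup R :=
  lcs R n ⊔ AddSubgroup.closure {x | ∃ c ∈ lcs R n, ∃ r : R, x = c * r}

/-- The additive span of `k`-fold products of elements of `S`. -/
def spanPow {R : Type*} [Ring R] (S : Set R) (k : ℕ) : AddSubgroup R :=
  AddSubgroup.closure {x | ∃ l : List R, l.length = k ∧ (∀ a ∈ l, a ∈ S) ∧ x = l.prod}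

/-- `J` is nilpotent: all `k`-fold products of its elements vanish for some `k > 0`. -/
def IsNilpotentSG {R : Type*} [Ring R] (J : AddSubgroup R) : Prop :=
  ∃ k : ℕ, 0 < k ∧ ∀ l : List R, l.length = k → (∀ a ∈ l, a ∈ J) → l.prod = 0

/-- `R` is semiprime: it has no nonzero nilpotent two-sided ideals. -/
def IsSemiprimeRing (R : Type*) [Ring R] : Prop :=
  ∀ J : AddSubgroup R, IsIdealSG J → IsNilpotentSG J → J = ⊥
/-!
Let `I` be a right ideal of Lie nilpotency class `m` and `Z = I ∩ C(I)` the centre of the Lie ring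
`I`. For `u, v ∈ Z` one has `u v [x, y] = [u x, v y]`, so, since `R = [R, R]`, a product of `k + 1`
elements of `Z` times any `r` lies in the `k`-th term of the lower central series of `I`; in
particular `Z ^ (m + 1) = 0`. As `w x z = z w x` for `w ∈ I` and `z ∈ Z`, a product of `n`
elements of the two-sided ideal generated by `Z` lies in the ideal generated by `Z ^ n`, so that
ideal `N` is nilpotent. It contains the last nonzero term of the lower central series of `I`, so
the image of `I` in `R / N` has smaller class, and induction on `m` gives a nilpotent ideal of
`R / N` containing it, whose preimage is nilpotent because `N` is. Left ideals of `R` are right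
ideals of `Rᵐᵒᵖ`.
-/

open Pointwise

def IsPerfectRing (R : Type*) [Ring R] : Prop :=
  AddSubgroup.closure {x : R | ∃ a b : R, x = a * b - b * a} = ⊤

section

variable {R S : Type*} [Ring R] [Ring S]

theorem IsPerfectRing.map_mem_of_map_commutator_mem {M : Type*} [AddGroup M]
    (hR : IsPerfectRing R) (φ : R →+ M) {T : AddSubgroup M}
    (h : ∀ a b : R, φ (a * b - b * a) ∈ T) (x : R) : φ x ∈ T := by
  have hle : AddSubgroup.closure {x : R | ∃ a b : R, x = a * b - b * a} ≤ T.comap φ :=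
    (AddSubgroup.closure_le _).2 (by rintro _ ⟨a, b, rfl⟩; exact h a b)
  exact hle (hR ▸ AddSubgroup.mem_top x)

theorem IsPerfectRing.of_surjective (hR : IsPerfectRing R) (φ : R →+ S)
    (hφ : Function.Surjective φ) (h : ∀ a b : R, ∃ c d : S, φ (a * b - b * a) = c * d - d * c) :
    IsPerfectRing S := by
  refine eq_top_iff.2 fun y _ => ?_
  obtain ⟨x, rfl⟩ := hφ y
  exact hR.map_mem_of_map_commutator_mem φ (fun a b => AddSubgroup.subset_closure (h a b)) x

theorem IsPerfectRing.op (hR : IsPerfectRing R) : IsPerfectRing Rᵐᵒᵖ :=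
  hR.of_surjective (MulOpposite.opAddEquiv : R ≃+ Rᵐᵒᵖ).toAddMonoidHom
    (MulOpposite.opAddEquiv : R ≃+ Rᵐᵒᵖ).surjective
    fun a b => ⟨.op b, .op a, by simp⟩

theorem itComm_congr {s t : ℕ → R} {n : ℕ} (h : ∀ j ≤ n, s j = t j) : itComm s n = itComm t n := by
  induction n with
  | zero => exact h 0 le_rfl
  | succ n ih => simp only [itComm, ih fun j hj => h j (by omega), h (n + 1) le_rfl]

theorem map_itComm (f : R →+* S) (s : ℕ → R) (n : ℕ) :
    f (itComm s n) = itComm (fun j => f (s j)) n := by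
  induction n with
  | zero => rfl
  | succ n ih => simp only [itComm, map_sub, map_mul, ih]

theorem itComm_op (s : ℕ → R) (n : ℕ) :
    itComm (fun j => MulOpposite.op (s j)) n = ((-1 : ℤ) ^ n) • MulOpposite.op (itComm s n) := by
  induction n with
  | zero => simp [itComm]
  | succ n ih =>
    simp only [itComm, ih, MulOpposite.op_sub, MulOpposite.op_mul, smul_mul_assoc, mul_smul_comm,
      pow_succ, mul_neg_one, neg_smul, ← smul_sub]
    rw [← smul_neg, neg_sub]

theorem itComm_mem {I : AddSubgroup R} (hI : IsRightIdealSG I) {s : ℕ → R} (hs : ∀ j, s j ∈ I)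
    (n : ℕ) : itComm s n ∈ I := by
  induction n with
  | zero => exact hs 0
  | succ n ih => exact sub_mem (hI _ ih _) (hI _ (hs _) _)

def lowerCentralTerm (I : AddSubgroup R) (n : ℕ) : AddSubgroup R :=
  AddSubgroup.closure {x | ∃ s : ℕ → R, (∀ j, s j ∈ I) ∧ x = itComm s n}

theorem le_lowerCentralTerm_zero (I : AddSubgroup R) : I ≤ lowerCentralTerm I 0 :=
  fun i hi => AddSubgroup.subset_closure ⟨fun _ => i, fun _ => hi, rfl⟩

theorem commutator_mem_lowerCentralTerm_succ {I : AddSubgroup R} {n : ℕ} {u i : R}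
    (hu : u ∈ lowerCentralTerm I n) (hi : i ∈ I) : u * i - i * u ∈ lowerCentralTerm I (n + 1) := by
  let φ : R →+ R := AddMonoidHom.mulRight i - AddMonoidHom.mulLeft i
  suffices lowerCentralTerm I n ≤ (lowerCentralTerm I (n + 1)).comap φ from this hu
  refine (AddSubgroup.closure_le _).2 ?_
  rintro _ ⟨s, hs, rfl⟩
  refine AddSubgroup.subset_closure ⟨Function.update s (n + 1) i, fun j => ?_, ?_⟩
  · rcases eq_or_ne j (n + 1) with rfl | hj
    · simpa using hi
    · simpa [hj] using hs j
  · have hsn : itComm (Function.update s (n + 1) i) n = itComm s n :=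
      itComm_congr fun j hj => Function.update_of_ne (by omega) _ _
    simp [φ, itComm, hsn]

theorem lowerCentralTerm_eq_bot {I : AddSubgroup R} {m : ℕ}
    (hm : LieNilpotentClassLe (I : Set R) m) : lowerCentralTerm I m = ⊥ :=
  eq_bot_iff.2 <| (AddSubgroup.closure_le _).2 <| by
    rintro _ ⟨s, hs, rfl⟩
    exact hm s hs

theorem mul_mul_commutator_eq {u v x y : R} (hv : Commute v (u * x)) (hu : Commute u (v * y))
    (huv : Commute u v) : u * v * (x * y - y * x) = u * x * (v * y) - v * y * (u * x) := by
  have h₁ : u * x * (v * y) = u * v * (x * y) := by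
    rw [← mul_assoc, ← hv.eq, huv.eq]; simp only [mul_assoc]
  have h₂ : v * y * (u * x) = u * v * (y * x) := by
    rw [← mul_assoc, ← hu.eq]; simp only [mul_assoc]
  rw [h₁, h₂, mul_sub]

theorem TwoSidedIdeal.mul_mem_of_mem_span {s t : Set R} {K : TwoSidedIdeal R}
    (h : ∀ a ∈ s, ∀ r : R, ∀ b ∈ t, a * r * b ∈ K) {x y : R}
    (hx : x ∈ TwoSidedIdeal.span s) (hy : y ∈ TwoSidedIdeal.span t) : x * y ∈ K := by
  have left : ∀ a ∈ s, ∀ r : R, ∀ y ∈ TwoSidedIdeal.span t, a * r * y ∈ K := by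
    intro a ha r y hy
    induction hy using TwoSidedIdeal.span_induction generalizing r with
    | mem b hb => exact h a ha r b hb
    | zero => simp [K.zero_mem]
    | add b c _ _ hb hc => rw [mul_add]; exact K.add_mem (hb r) (hc r)
    | neg b _ hb => rw [mul_neg]; exact K.neg_mem (hb r)
    | left_absorb c b _ hb => rw [← mul_assoc, mul_assoc a]; exact hb _
    | right_absorb c b _ hb => rw [← mul_assoc]; exact K.mul_mem_right _ _ (hb r)
  induction hx using TwoSidedIdeal.span_induction generalizing y with
  | mem a ha => simpa using left a ha 1 y hy
  | zero => simp [K.zero_mem]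
  | add a c _ _ ha hc => rw [add_mul]; exact K.add_mem (ha hy) (hc hy)
  | neg a _ ha => rw [neg_mul]; exact K.neg_mem (ha hy)
  | left_absorb c a _ ha => rw [mul_assoc]; exact K.mul_mem_left _ _ (ha hy)
  | right_absorb c a _ ha =>
    rw [mul_assoc]; exact ha ((TwoSidedIdeal.span t).mul_mem_left _ _ hy)

def lieCenter (I : AddSubgroup R) : Set R := I ∩ Set.centralizer I

section lieCenter

variable {I : AddSubgroup R}

theorem lieCenter_pow_subset_centralizer (n : ℕ) : lieCenter I ^ n ⊆ Set.centralizer I :=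
  Submonoid.pow_subset (S := Submonoid.centralizer (I : Set R)) Set.inter_subset_right

theorem lieCenter_pow_succ_subset (hI : IsRightIdealSG I) (n : ℕ) : lieCenter I ^ (n + 1) ⊆ I := by
  rw [pow_succ']
  rintro _ ⟨z, hz, w, -, rfl⟩
  exact hI z hz.1 w

theorem itComm_mem_lieCenter (hI : IsRightIdealSG I) {m : ℕ}
    (hm : LieNilpotentClassLe (I : Set R) (m + 1)) {s : ℕ → R} (hs : ∀ j, s j ∈ I) :
    itComm s m ∈ lieCenter I := by
  refine ⟨itComm_mem hI hs m, fun i hi => (sub_eq_zero.1 ?_).symm⟩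
  have h := commutator_mem_lowerCentralTerm_succ
    (AddSubgroup.subset_closure ⟨s, hs, rfl⟩ : itComm s m ∈ lowerCentralTerm I m) hi
  rwa [lowerCentralTerm_eq_bot hm, AddSubgroup.mem_bot] at h

theorem mul_mem_lowerCentralTerm (hR : IsPerfectRing R) (hI : IsRightIdealSG I) {k : ℕ} {w : R}
    (hw : w ∈ lieCenter I ^ (k + 1)) (r : R) : w * r ∈ lowerCentralTerm I k := by
  induction k generalizing w r with
  | zero => exact le_lowerCentralTerm_zero I (hI w (by simpa using hw : w ∈ lieCenter I).1 r)
  | succ k ih =>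
    rw [pow_succ] at hw
    obtain ⟨u, hu, v, hv, rfl⟩ := hw
    have huI : u ∈ I := lieCenter_pow_succ_subset hI k hu
    have huC : u ∈ Set.centralizer I := lieCenter_pow_subset_centralizer _ hu
    refine hR.map_mem_of_map_commutator_mem (AddMonoidHom.mulLeft (u * v)) (fun x y => ?_) r
    rw [AddMonoidHom.coe_mulLeft, mul_mul_commutator_eq (hv.2 _ (hI u huI x)).symm
      (huC _ (hI v hv.1 y)).symm (huC v hv.1).symm]
    exact commutator_mem_lowerCentralTerm_succ (ih hu x) (hI v hv.1 y)

theorem eq_zero_of_mem_lieCenter_pow (hR : IsPerfectRing R) (hI : IsRightIdealSG I) {m : ℕ}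
    (hm : LieNilpotentClassLe (I : Set R) m) {w : R} (hw : w ∈ lieCenter I ^ (m + 1)) : w = 0 := by
  simpa [lowerCentralTerm_eq_bot hm] using mul_mem_lowerCentralTerm hR hI hw 1

theorem list_prod_mem_span_lieCenter_pow (hI : IsRightIdealSG I) (l : List R)
    (hl : ∀ a ∈ l, a ∈ TwoSidedIdeal.span (lieCenter I)) :
    l.prod ∈ TwoSidedIdeal.span (lieCenter I ^ l.length) := by
  induction l with
  | nil => exact TwoSidedIdeal.subset_span (Set.one_mem_one (α := R))
  | cons a l ih =>
    rw [List.prod_cons, List.length_cons]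
    refine TwoSidedIdeal.mul_mem_of_mem_span (fun z hz r b hb => ?_) (hl a (by simp))
      (ih fun c hc => hl c (by simp [hc]))
    rw [lieCenter_pow_subset_centralizer _ hb _ (hI z hz.1 r), ← mul_assoc, pow_succ]
    exact TwoSidedIdeal.mul_mem_right _ _ _ (TwoSidedIdeal.subset_span ⟨b, hb, z, hz, rfl⟩)

theorem list_prod_eq_zero_of_mem_span_lieCenter (hR : IsPerfectRing R) (hI : IsRightIdealSG I)
    {m : ℕ} (hm : LieNilpotentClassLe (I : Set R) m) {l : List R} (hlen : l.length = m + 1)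
    (hl : ∀ a ∈ l, a ∈ TwoSidedIdeal.span (lieCenter I)) : l.prod = 0 := by
  have hbot : TwoSidedIdeal.span (lieCenter I ^ (m + 1)) ≤ ⊥ := TwoSidedIdeal.span_le.2
    fun w hw => (TwoSidedIdeal.mem_bot R).2 (eq_zero_of_mem_lieCenter_pow hR hI hm hw)
  exact (TwoSidedIdeal.mem_bot R).1 (hbot (hlen ▸ list_prod_mem_span_lieCenter_pow hI l hl))

end lieCenter

theorem isIdealSG_bot : IsIdealSG (⊥ : AddSubgroup R) := by
  constructor <;> intro i hi r <;> simp_all [AddSubgroup.mem_bot]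

theorem isNilpotentSG_bot : IsNilpotentSG (⊥ : AddSubgroup R) := by
  refine ⟨1, one_pos, fun l hl hmem => ?_⟩
  obtain ⟨a, rfl⟩ := List.length_eq_one_iff.1 hl
  simpa using hmem a (List.mem_singleton_self a)

theorem IsRightIdealSG.map {f : R →+* S} (hf : Function.Surjective f) {I : AddSubgroup R}
    (hI : IsRightIdealSG I) : IsRightIdealSG (I.map f.toAddMonoidHom) := by
  rintro _ ⟨i, hi, rfl⟩ r
  obtain ⟨x, rfl⟩ := hf r
  exact ⟨i * x, hI i hi x, map_mul f i x⟩

theorem IsIdealSG.comap (f : R →+* S) {J : AddSubgroup S} (hJ : IsIdealSG J) :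
    IsIdealSG (J.comap f.toAddMonoidHom) := by
  constructor <;> intro i hi r <;> simp only [AddSubgroup.mem_comap, RingHom.toAddMonoidHom_eq_coe,
    AddMonoidHom.coe_coe, map_mul] at hi ⊢
  exacts [hJ.1 _ hi (f r), hJ.2 _ hi (f r)]

theorem lieNilpotentClassLe_map_of_map_itComm_eq_zero {f : R →+* S} {I : AddSubgroup R}
    {m : ℕ} (h : ∀ s : ℕ → R, (∀ j, s j ∈ I) → f (itComm s m) = 0) :
    LieNilpotentClassLe (I.map f.toAddMonoidHom : Set S) m := by
  intro s hs
  choose t ht hts using fun j => AddSubgroup.mem_map.1 (hs j)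
  have hst : s = fun j => f (t j) := funext fun j => (hts j).symm
  rw [hst, ← map_itComm]
  exact h t ht

theorem exists_list_prod_eq_of_length_eq_mul {M : Type*} [Monoid M] {A B : Set M} {k : ℕ}
    (h : ∀ l : List M, l.length = k → (∀ a ∈ l, a ∈ A) → l.prod ∈ B) (t : ℕ) (l : List M)
    (hl : l.length = k * t) (hA : ∀ a ∈ l, a ∈ A) :
    ∃ l' : List M, l'.length = t ∧ (∀ b ∈ l', b ∈ B) ∧ l'.prod = l.prod := by
  induction t generalizing l with
  | zero => exact ⟨[], rfl, by simp, by simp_all⟩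
  | succ t ih =>
    obtain ⟨l', hl', hB, hprod⟩ := ih (l.drop k) (by simp [hl, Nat.mul_succ])
      fun a ha => hA a (List.mem_of_mem_drop ha)
    refine ⟨(l.take k).prod :: l', by simp [hl'], ?_, ?_⟩
    · simp only [List.mem_cons, forall_eq_or_imp]
      exact ⟨h _ (by simp [hl, Nat.mul_succ]) fun a ha => hA a (List.mem_of_mem_take ha), hB⟩
    · rw [List.prod_cons, hprod, ← List.prod_append, List.take_append_drop]

theorem IsNilpotentSG.comap {f : R →+* S} {J : AddSubgroup S} (hJ : IsNilpotentSG J)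
    (hker : IsNilpotentSG f.toAddMonoidHom.ker) : IsNilpotentSG (J.comap f.toAddMonoidHom) := by
  obtain ⟨k, hk, hJk⟩ := hJ
  obtain ⟨t, ht, hkert⟩ := hker
  refine ⟨k * t, Nat.mul_pos hk ht, fun l hl hmem => ?_⟩
  have hblock (l : List R) (hl : l.length = k) (hmem : ∀ a ∈ l, a ∈ J.comap f.toAddMonoidHom) :
      l.prod ∈ f.toAddMonoidHom.ker := by
    change f l.prod = 0
    rw [map_list_prod]
    exact hJk _ (by simp [hl]) (by simpa using hmem)
  obtain ⟨l', hl', hmem', hprod⟩ := exists_list_prod_eq_of_length_eq_mul hblock t l hl hmem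
  rw [← hprod]
  exact hkert l' hl' hmem'

theorem IsLeftIdealSG.op {I : AddSubgroup R} (hI : IsLeftIdealSG I) :
    IsRightIdealSG (I.comap (MulOpposite.opAddEquiv : R ≃+ Rᵐᵒᵖ).symm.toAddMonoidHom) :=
  fun _ hi r => hI _ hi r.unop

theorem LieNilpotentClassLe.op {I : AddSubgroup R} {m : ℕ}
    (hm : LieNilpotentClassLe (I : Set R) m) :
    LieNilpotentClassLe
      (I.comap (MulOpposite.opAddEquiv : R ≃+ Rᵐᵒᵖ).symm.toAddMonoidHom : Set Rᵐᵒᵖ) m := by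
  intro s hs
  have h := itComm_op (fun j => (s j).unop) m
  simp only [MulOpposite.op_unop] at h
  rw [h, hm (fun j => (s j).unop) hs, MulOpposite.op_zero, smul_zero]

theorem IsIdealSG.unop {J : AddSubgroup Rᵐᵒᵖ} (hJ : IsIdealSG J) :
    IsIdealSG (J.comap (MulOpposite.opAddEquiv : R ≃+ Rᵐᵒᵖ).toAddMonoidHom) :=
  ⟨fun _ hi r => hJ.2 _ hi (.op r), fun _ hi r => hJ.1 _ hi (.op r)⟩

theorem IsNilpotentSG.unop {J : AddSubgroup Rᵐᵒᵖ} (hJ : IsNilpotentSG J) :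
    IsNilpotentSG (J.comap (MulOpposite.opAddEquiv : R ≃+ Rᵐᵒᵖ).toAddMonoidHom) := by
  obtain ⟨k, hk, h⟩ := hJ
  refine ⟨k, hk, fun l hl hmem => MulOpposite.op_injective ?_⟩
  rw [MulOpposite.op_list_prod, MulOpposite.op_zero]
  exact h _ (by simp [hl]) (by simpa using hmem)

end

theorem exists_nilpotent_ideal_of_isRightIdealSG {R : Type*} [Ring R] (hR : IsPerfectRing R)
    {I : AddSubgroup R} (hI : IsRightIdealSG I) {m : ℕ} (hm : LieNilpotentClassLe (I : Set R) m) :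
    ∃ J : AddSubgroup R, IsIdealSG J ∧ IsNilpotentSG J ∧ I ≤ J := by
  induction m generalizing R with
  | zero => exact ⟨⊥, isIdealSG_bot, isNilpotentSG_bot, fun i hi => hm (fun _ => i) fun _ => hi⟩
  | succ m ih =>
    let N := TwoSidedIdeal.span (lieCenter I)
    let f := N.ringCon.mk'
    have hf : Function.Surjective f := N.ringCon.mk'_surjective
    have hker (x : R) : f x = 0 ↔ x ∈ N := by
      rw [← TwoSidedIdeal.mem_ker, TwoSidedIdeal.ker_ringCon_mk']
    obtain ⟨J, hJ, hJnil, hIJ⟩ := ih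
      (hR.of_surjective f.toAddMonoidHom hf fun a b => ⟨f a, f b, by simp⟩) (hI.map hf)
      (lieNilpotentClassLe_map_of_map_itComm_eq_zero fun s hs =>
        (hker _).2 (TwoSidedIdeal.subset_span (itComm_mem_lieCenter hI hm hs)))
    refine ⟨J.comap f.toAddMonoidHom, hJ.comap f, hJnil.comap ?_,
      fun i hi => hIJ (AddSubgroup.mem_map_of_mem _ hi)⟩
    exact ⟨m + 2, by omega, fun l hl hmem => list_prod_eq_zero_of_mem_span_lieCenter hR hI hm hl
      fun a ha => (hker a).1 (hmem a ha)⟩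

theorem exists_nilpotent_ideal_of_isLeftIdealSG {R : Type*} [Ring R] (hR : IsPerfectRing R)
    {I : AddSubgroup R} (hI : IsLeftIdealSG I) {m : ℕ} (hm : LieNilpotentClassLe (I : Set R) m) :
    ∃ J : AddSubgroup R, IsIdealSG J ∧ IsNilpotentSG J ∧ I ≤ J := by
  obtain ⟨J, hJ, hJnil, hIJ⟩ := exists_nilpotent_ideal_of_isRightIdealSG hR.op hI.op hm.op
  exact ⟨_, hJ.unop, hJnil.unop, fun i hi => hIJ hi⟩

/-- **Corollary of Theorem 2.** If `R = [R,R]` and `I` is a Lie nilpotent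
one-sided ideal of `R`, then `I` is contained in a nilpotent two-sided ideal of `R`. -/
theorem perfect_ring_lie_nilpotent_ideal {R : Type*} [Ring R]
    (hR : AddSubgroup.closure {x : R | ∃ a b : R, x = a * b - b * a} = ⊤)
    (I : AddSubgroup R) (hI : IsLeftIdealSG I ∨ IsRightIdealSG I)
    (hnil : ∃ m, LieNilpotentClassLe (I : Set R) m) :
    ∃ J : AddSubgroup R, IsIdealSG J ∧ IsNilpotentSG J ∧ I ≤ J := by
  obtain ⟨m, hm⟩ := hnil
  rcases hI with hleft | hright
  · exact exists_nilpotent_ideal_of_isLeftIdealSG hR hleft hm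
  · exact exists_nilpotent_ideal_of_isRightIdealSG hR hright hm
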